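/- arXiv:1809.09482 — 3 statements merged into one kernel-verified Lean document; each statement's English description precedes it below -/
import Mathlib

section
/- For 0 < H < 1/2 and 0 ≤ s < t, the kernel K_H(t,s) = c_H[(t/s)^{H-1/2}(t-s)^{H-1/2} - (H-1/2) s^{1/2-H} ∫_s^t u^{H-3/2}(u-s)^{H-1/2} du] satisfies |K_H(t,s)| ≤ 2 c_H ((t-s)^{H-1/2} + s^{H-1/2}). -/
open Real intervalIntegral

/-- The fBm Volterra kernel for `H < 1/2`, defined for `0 < s < t`. -/
noncomputable def fbmKernel (cH H t s : ℝ) : ℝ :=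
  if s < t then
    cH * ((t / s) ^ (H - 1/2) * (t - s) ^ (H - 1/2)
      - (H - 1/2) * s ^ (1/2 - H) * ∫ u in s..t, u ^ (H - 3/2) * (u - s) ^ (H - 1/2))
  else 0

private lemma sub_rpow_intInt {r s b : ℝ} (hr : -1 < r) :
    IntervalIntegrable (fun u => (u - s) ^ r) MeasureTheory.volume s b := by
  have h := (intervalIntegrable_rpow' (a := 0) (b := b - s) hr).comp_sub_right s
  simpa using h

private lemma sub_rpow_integral {r s b : ℝ} (hr : -1 < r) :
    (∫ u in s..b, (u - s) ^ r) = (b - s) ^ (r + 1) / (r + 1) := by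
  have h := intervalIntegral.integral_comp_sub_right (a := s) (b := b)
    (fun x : ℝ => x ^ r) s
  rw [h, sub_self, integral_rpow (Or.inl hr),
    Real.zero_rpow (by linarith : r + 1 ≠ 0), sub_zero]

set_option maxHeartbeats 1000000 in
theorem fbmKernel_bound (H cH : ℝ) (hH : H ∈ Set.Ioo (0:ℝ) (1/2)) (hc : 0 < cH)
    (s t : ℝ) (hs : 0 < s) (hst : s < t) :
    |fbmKernel cH H t s| ≤ 2 * cH * ((t - s) ^ (H - 1/2) + s ^ (H - 1/2)) := by
  obtain ⟨hH0, hH2⟩ := hH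
  obtain ⟨r, hrdef⟩ : ∃ r : ℝ, r = H - 1/2 := ⟨_, rfl⟩
  have hr1 : -(1/2 : ℝ) < r := by rw [hrdef]; linarith
  have hr0 : r < 0 := by rw [hrdef]; linarith
  have hr1p : (0:ℝ) < r + 1 := by linarith
  have hts : 0 < t - s := by linarith
  have ht : 0 < t := lt_trans hs hst
  -- integrability of the integrand on s..t
  have hfm : MeasureTheory.AEStronglyMeasurable (fun u : ℝ => u ^ (r - 1) * (u - s) ^ r)
      (MeasureTheory.volume.restrict (Set.uIoc s t)) := by
    rw [Set.uIoc_of_le hst.le]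
    refine ContinuousOn.aestronglyMeasurable ?_ measurableSet_Ioc
    refine ContinuousOn.mul ?_ ?_
    · exact continuousOn_id.rpow_const fun u hu => Or.inl (ne_of_gt (lt_trans hs hu.1))
    · exact (continuousOn_id.sub continuousOn_const).rpow_const
        fun u hu => Or.inl (ne_of_gt (sub_pos.mpr hu.1))
  have hg_int : ∀ b : ℝ, IntervalIntegrable
      (fun u => s ^ (r - 1) * (u - s) ^ r) MeasureTheory.volume s b :=
    fun b => (sub_rpow_intInt (by linarith)).const_mul _
  have hf_int : IntervalIntegrable (fun u : ℝ => u ^ (r - 1) * (u - s) ^ r)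
      MeasureTheory.volume s t := by
    refine (hg_int t).mono_fun' hfm ?_
    rw [Set.uIoc_of_le hst.le]
    filter_upwards [MeasureTheory.ae_restrict_mem measurableSet_Ioc] with u hu
    have hu0 : 0 < u := lt_trans hs hu.1
    have hus : 0 ≤ u - s := by linarith [hu.1]
    have hfnn : 0 ≤ u ^ (r - 1) * (u - s) ^ r :=
      mul_nonneg (Real.rpow_nonneg hu0.le _) (Real.rpow_nonneg hus _)
    rw [Real.norm_of_nonneg hfnn]
    exact mul_le_mul_of_nonneg_right
      (Real.rpow_le_rpow_of_nonpos hs hu.1.le (by linarith)) (Real.rpow_nonneg hus _)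
  -- pointwise bound on [s, b]
  have hfg : ∀ b : ℝ, ∀ u ∈ Set.Icc s b, u ^ (r - 1) * (u - s) ^ r
      ≤ s ^ (r - 1) * (u - s) ^ r := by
    intro b u hu
    have hus : 0 ≤ u - s := by linarith [hu.1]
    exact mul_le_mul_of_nonneg_right
      (Real.rpow_le_rpow_of_nonpos hs hu.1 (by linarith)) (Real.rpow_nonneg hus _)
  -- bound on the first part of the integral
  have hpart1 : ∀ b : ℝ, s ≤ b → b ≤ 2 * s → b ≤ t →
      (∫ u in s..b, u ^ (r - 1) * (u - s) ^ r) ≤ s ^ (2 * r) / (r + 1) := by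
    intro b hb hb2 hbt
    have hsub : Set.uIcc s b ⊆ Set.uIcc s t :=
      Set.uIcc_subset_uIcc Set.left_mem_uIcc (Set.mem_uIcc.mpr (Or.inl ⟨hb, hbt⟩))
    have h1 : (∫ u in s..b, u ^ (r - 1) * (u - s) ^ r)
        ≤ ∫ u in s..b, s ^ (r - 1) * (u - s) ^ r :=
      intervalIntegral.integral_mono_on hb (hf_int.mono_set hsub) (hg_int b) (hfg b)
    have h2 : (∫ u in s..b, s ^ (r - 1) * (u - s) ^ r)
        = s ^ (r - 1) * ((b - s) ^ (r + 1) / (r + 1)) := by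
      rw [intervalIntegral.integral_const_mul, sub_rpow_integral (by linarith)]
    have h3 : (b - s) ^ (r + 1) ≤ s ^ (r + 1) :=
      Real.rpow_le_rpow (by linarith) (by linarith) (by linarith)
    have h4 : s ^ (r - 1) * s ^ (r + 1) = s ^ (2 * r) := by
      rw [← Real.rpow_add hs]; congr 1; ring
    have h5 : s ^ (r - 1) * ((b - s) ^ (r + 1) / (r + 1))
        ≤ s ^ (r - 1) * (s ^ (r + 1) / (r + 1)) := by
      have h6 : (b - s) ^ (r + 1) / (r + 1) ≤ s ^ (r + 1) / (r + 1) := by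
        exact div_le_div_of_nonneg_right h3 hr1p.le
      exact mul_le_mul_of_nonneg_left h6 (Real.rpow_nonneg hs.le _)
    calc (∫ u in s..b, u ^ (r - 1) * (u - s) ^ r)
        ≤ s ^ (r - 1) * ((b - s) ^ (r + 1) / (r + 1)) := by rw [← h2]; exact h1
      _ ≤ s ^ (r - 1) * (s ^ (r + 1) / (r + 1)) := h5
      _ = s ^ (2 * r) / (r + 1) := by rw [← h4]; ring
  -- bound on the full integral
  have h2rpos : (0 : ℝ) < 2 ^ r := Real.rpow_pos_of_pos two_pos r
  have hIle : (∫ u in s..t, u ^ (r - 1) * (u - s) ^ r)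
      ≤ s ^ (2 * r) / (r + 1) + 2 ^ r * s ^ (2 * r) / (-(2 * r)) := by
    have hsecond : 0 ≤ 2 ^ r * s ^ (2 * r) / (-(2 * r)) :=
      div_nonneg (mul_nonneg h2rpos.le (Real.rpow_nonneg hs.le _)) (by linarith)
    rcases le_or_gt t (2 * s) with hcase | hcase
    · have := hpart1 t hst.le hcase le_rfl
      linarith
    · have hsub1 : Set.uIcc s (2 * s) ⊆ Set.uIcc s t :=
        Set.uIcc_subset_uIcc Set.left_mem_uIcc
          (Set.mem_uIcc.mpr (Or.inl ⟨by linarith, by linarith⟩))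
      have hsub2 : Set.uIcc (2 * s) t ⊆ Set.uIcc s t :=
        Set.uIcc_subset_uIcc (Set.mem_uIcc.mpr (Or.inl ⟨by linarith, by linarith⟩))
          Set.right_mem_uIcc
      have hsplit : (∫ u in s..(2 * s), u ^ (r - 1) * (u - s) ^ r)
          + (∫ u in (2 * s)..t, u ^ (r - 1) * (u - s) ^ r)
          = ∫ u in s..t, u ^ (r - 1) * (u - s) ^ r :=
        intervalIntegral.integral_add_adjacent_intervals
          (hf_int.mono_set hsub1) (hf_int.mono_set hsub2)
      have hA := hpart1 (2 * s) (by linarith) le_rfl (by linarith)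
      have h0not : (0 : ℝ) ∉ Set.uIcc (2 * s) t :=
        Set.notMem_uIcc_of_lt (by linarith) ht
      have hh_int : IntervalIntegrable (fun u : ℝ => u ^ (2 * r - 1) / 2 ^ r)
          MeasureTheory.volume (2 * s) t :=
        (intervalIntegrable_rpow (Or.inr h0not)).div_const _
      have hB1 : (∫ u in (2 * s)..t, u ^ (r - 1) * (u - s) ^ r)
          ≤ ∫ u in (2 * s)..t, u ^ (2 * r - 1) / 2 ^ r := by
        refine intervalIntegral.integral_mono_on (by linarith)
          (hf_int.mono_set hsub2) hh_int ?_
        intro u hu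
        have hu0 : 0 < u := by linarith [hu.1]
        have hus : (0:ℝ) < u / 2 := by linarith
        have h1 : (u - s) ^ r ≤ (u / 2) ^ r :=
          Real.rpow_le_rpow_of_nonpos hus (by linarith [hu.1]) hr0.le
        have h2 : (u / 2) ^ r = u ^ r / 2 ^ r := Real.div_rpow hu0.le (by norm_num) r
        have h3 : u ^ (r - 1) * (u ^ r / 2 ^ r) = u ^ (2 * r - 1) / 2 ^ r := by
          rw [mul_div_assoc', ← Real.rpow_add hu0,
            show r - 1 + r = 2 * r - 1 by ring]
        calc u ^ (r - 1) * (u - s) ^ r ≤ u ^ (r - 1) * (u / 2) ^ r :=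
              mul_le_mul_of_nonneg_left h1 (Real.rpow_nonneg hu0.le _)
          _ = u ^ (2 * r - 1) / 2 ^ r := by rw [h2, h3]
      have hB2 : (∫ u in (2 * s)..t, u ^ (2 * r - 1) / 2 ^ r)
          ≤ 2 ^ r * s ^ (2 * r) / (-(2 * r)) := by
        have hne : 2 * r - 1 ≠ -1 := fun h => hr0.ne (by linarith)
        rw [intervalIntegral.integral_div, integral_rpow (Or.inr ⟨hne, h0not⟩),
          show 2 * r - 1 + 1 = 2 * r by ring]
        have htpow : 0 ≤ t ^ (2 * r) := Real.rpow_nonneg ht.le _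
        have h2s : (2 * s) ^ (2 * r) = 2 ^ (2 * r) * s ^ (2 * r) :=
          Real.mul_rpow (by norm_num) hs.le
        have h22 : (2 : ℝ) ^ (2 * r) = 2 ^ r * 2 ^ r := by
          rw [← Real.rpow_add two_pos]; congr 1; ring
        have hspow : 0 ≤ s ^ (2 * r) := Real.rpow_nonneg hs.le _
        have hD : (0:ℝ) < -(2 * r) * 2 ^ r := mul_pos (by linarith) h2rpos
        rw [h2s, h22]
        have e : (t ^ (2 * r) - 2 ^ r * 2 ^ r * s ^ (2 * r)) / (2 * r) / 2 ^ r
            = (2 ^ r * 2 ^ r * s ^ (2 * r) - t ^ (2 * r)) / (-(2 * r) * 2 ^ r) := by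
          have h2r2 : (2 * r) * 2 ^ r ≠ 0 :=
            ne_of_lt (mul_neg_of_neg_of_pos (by linarith) h2rpos)
          rw [div_div, div_eq_div_iff h2r2 hD.ne']
          ring
        rw [e]
        have e2 : 2 ^ r * s ^ (2 * r) / (-(2 * r))
            = (2 ^ r * 2 ^ r * s ^ (2 * r)) / (-(2 * r) * 2 ^ r) := by
          rw [div_eq_div_iff (ne_of_gt (by linarith : (0:ℝ) < -(2 * r))) hD.ne']; ring
        rw [e2]
        exact div_le_div_of_nonneg_right (by linarith) hD.le
      linarith
  -- nonnegativity of the integral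
  have hI_nonneg : 0 ≤ ∫ u in s..t, u ^ (r - 1) * (u - s) ^ r := by
    refine intervalIntegral.integral_nonneg hst.le fun u hu => ?_
    exact mul_nonneg (Real.rpow_nonneg (by linarith [hu.1]) _)
      (Real.rpow_nonneg (by linarith [hu.1]) _)
  -- unfold the kernel
  rw [fbmKernel, if_pos hst,
    show H - 3/2 = r - 1 by rw [hrdef]; ring,
    show H - 1/2 = r from hrdef.symm,
    show 1/2 - H = -r by rw [hrdef]; ring]
  -- estimates on the two pieces
  have hX : 0 ≤ (t - s) ^ r := Real.rpow_nonneg hts.le _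
  have ha : 0 < s ^ r := Real.rpow_pos_of_pos hs _
  have hAle : (t / s) ^ r * (t - s) ^ r ≤ (t - s) ^ r := by
    have h1 : (t / s) ^ r ≤ 1 :=
      Real.rpow_le_one_of_one_le_of_nonpos ((one_le_div hs).mpr hst.le) hr0.le
    nlinarith
  have hA0 : 0 ≤ (t / s) ^ r * (t - s) ^ r :=
    mul_nonneg (Real.rpow_nonneg (by positivity) _) hX
  have hcoef : 0 ≤ (-r) * s ^ (-r) :=
    mul_nonneg (by linarith) (Real.rpow_nonneg hs.le _)
  have hBle : (-r) * s ^ (-r) * (∫ u in s..t, u ^ (r - 1) * (u - s) ^ r)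
      ≤ (-r) * s ^ (-r) * (s ^ (2 * r) / (r + 1) + 2 ^ r * s ^ (2 * r) / (-(2 * r))) :=
    mul_le_mul_of_nonneg_left hIle hcoef
  have hsa : s ^ (-r) * s ^ (2 * r) = s ^ r := by
    rw [← Real.rpow_add hs]; congr 1; ring
  have hsum : (-r) * s ^ (-r) * (s ^ (2 * r) / (r + 1) + 2 ^ r * s ^ (2 * r) / (-(2 * r)))
      ≤ 3 / 2 * s ^ r := by
    have e1 : (-r) * s ^ (-r) * (s ^ (2 * r) / (r + 1))
        = (-r) / (r + 1) * (s ^ (-r) * s ^ (2 * r)) := by ring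
    have e2 : (-r) * s ^ (-r) * (2 ^ r * s ^ (2 * r) / (-(2 * r)))
        = 2 ^ r / 2 * (s ^ (-r) * s ^ (2 * r)) := by
      field_simp [hr0.ne]
    have h2r1 : (2:ℝ) ^ r ≤ 1 := Real.rpow_le_one_of_one_le_of_nonpos one_le_two hr0.le
    have hfrac : (-r) / (r + 1) ≤ 1 := by
      rw [div_le_one hr1p]; linarith
    rw [mul_add, e1, e2, hsa]
    nlinarith
  have hBnn : 0 ≤ (-r) * s ^ (-r) * (∫ u in s..t, u ^ (r - 1) * (u - s) ^ r) :=
    mul_nonneg hcoef hI_nonneg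
  have hArg : 0 ≤ (t / s) ^ r * (t - s) ^ r
      - r * s ^ (-r) * (∫ u in s..t, u ^ (r - 1) * (u - s) ^ r) := by
    linarith
  rw [abs_of_nonneg (mul_nonneg hc.le hArg)]
  have hstep : (t / s) ^ r * (t - s) ^ r
      - r * s ^ (-r) * (∫ u in s..t, u ^ (r - 1) * (u - s) ^ r)
      ≤ (t - s) ^ r + 3 / 2 * s ^ r := by
    linarith [hBle.trans hsum]
  calc cH * ((t / s) ^ r * (t - s) ^ r
      - r * s ^ (-r) * (∫ u in s..t, u ^ (r - 1) * (u - s) ^ r))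
      ≤ cH * ((t - s) ^ r + 3 / 2 * s ^ r) := mul_le_mul_of_nonneg_left hstep hc.le
    _ ≤ 2 * cH * ((t - s) ^ r + s ^ r) := by
        nlinarith [mul_nonneg hc.le hX, mul_pos hc ha]
end

section
/- For 0 < H < 1/2 and 0 < s < t, the partial derivative in t of the fractional Brownian kernel satisfies |∂K_H/∂t (t,s)| ≤ c_H (1/2 - H)(t-s)^{H - 3/2}. -/
open Real intervalIntegral

/-- The normalizing constant `c_H`. -/
noncomputable def fbmConst (H : ℝ) : ℝ :=
  Real.sqrt (2 * H / ((1 - 2*H) * Real.Gamma (1 - 2*H) * Real.Gamma (H + 1/2) / Real.Gamma (3/2 - H)))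

theorem fbmKernel_deriv_bound (H : ℝ) (hH : H ∈ Set.Ioo (0:ℝ) (1/2))
    (s t : ℝ) (hs : 0 < s) (hst : s < t) :
    |deriv (fun τ => fbmKernel (fbmConst H) H τ s) t|
      ≤ fbmConst H * (1/2 - H) * (t - s) ^ (H - 3/2) := by
  obtain ⟨hH0, hH2⟩ := hH
  have ht : (0:ℝ) < t := hs.trans hst
  have hts : (0:ℝ) < t - s := sub_pos.2 hst
  set cH := fbmConst H with hcH
  have hcH0 : 0 ≤ cH := Real.sqrt_nonneg _
  -- the function agrees with the explicit branch near t
  have hev : (fun τ => fbmKernel cH H τ s) =ᶠ[nhds t]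
      (fun τ => cH * ((τ / s) ^ (H - 1/2) * (τ - s) ^ (H - 1/2)
        - (H - 1/2) * s ^ (1/2 - H) * ∫ u in s..τ, u ^ (H - 3/2) * (u - s) ^ (H - 1/2))) := by
    filter_upwards [eventually_gt_nhds hst] with τ hτ
    simp [fbmKernel, hτ]
  rw [hev.deriv_eq]
  -- derivative of (τ/s)^(H-1/2)
  have h1 : HasDerivAt (fun τ : ℝ => (τ / s) ^ (H - 1/2))
      ((H - 1/2) * (t / s) ^ (H - 1/2 - 1) * (1 / s)) t := by
    have hd : HasDerivAt (fun τ : ℝ => τ / s) (1 / s) t := (hasDerivAt_id t).div_const s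
    exact (Real.hasDerivAt_rpow_const (Or.inl (div_pos ht hs).ne')).comp t hd
  -- derivative of (τ - s)^(H-1/2)
  have h2 : HasDerivAt (fun τ : ℝ => (τ - s) ^ (H - 1/2))
      ((H - 1/2) * (t - s) ^ (H - 1/2 - 1) * 1) t := by
    have hd : HasDerivAt (fun τ : ℝ => τ - s) 1 t := (hasDerivAt_id t).sub_const s
    exact (Real.hasDerivAt_rpow_const (Or.inl hts.ne')).comp t hd
  -- derivative of the integral
  have hint : IntervalIntegrable (fun u => u ^ (H - 3/2) * (u - s) ^ (H - 1/2))
      MeasureTheory.volume s t := by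
    have hg : IntervalIntegrable (fun u : ℝ => (u - s) ^ (H - 1/2)) MeasureTheory.volume s t := by
      have := (intervalIntegral.intervalIntegrable_rpow'
        (show (-1:ℝ) < H - 1/2 by linarith) (a := 0) (b := t - s)).comp_sub_right s
      simpa using this
    refine hg.continuousOn_mul ?_
    intro u hu
    rw [Set.uIcc_of_le hst.le] at hu
    exact (Real.continuousAt_rpow_const u _ (Or.inl (lt_of_lt_of_le hs hu.1).ne')).continuousWithinAt
  have hcont : ∀ u ∈ Set.Ioi s, ContinuousAt
      (fun u : ℝ => u ^ (H - 3/2) * (u - s) ^ (H - 1/2)) u := by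
    intro u hu
    have hu0 : (0:ℝ) < u := hs.trans hu
    have c1 : ContinuousAt (fun u : ℝ => u ^ (H - 3/2)) u :=
      Real.continuousAt_rpow_const u _ (Or.inl hu0.ne')
    have c2 : ContinuousAt (fun u : ℝ => (u - s) ^ (H - 1/2)) u :=
      (continuousAt_id.sub continuousAt_const).rpow_const (Or.inl (sub_pos.2 hu).ne')
    exact c1.mul c2
  have h3 : HasDerivAt (fun τ => ∫ u in s..τ, u ^ (H - 3/2) * (u - s) ^ (H - 1/2))
      (t ^ (H - 3/2) * (t - s) ^ (H - 1/2)) t :=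
    intervalIntegral.integral_hasDerivAt_right hint
      (ContinuousAt.stronglyMeasurableAtFilter isOpen_Ioi hcont t hst)
      (hcont t hst)
  -- assemble the derivative
  have hD : HasDerivAt (fun τ => cH * ((τ / s) ^ (H - 1/2) * (τ - s) ^ (H - 1/2)
        - (H - 1/2) * s ^ (1/2 - H) * ∫ u in s..τ, u ^ (H - 3/2) * (u - s) ^ (H - 1/2)))
      (cH * (((H - 1/2) * (t / s) ^ (H - 1/2 - 1) * (1 / s) * (t - s) ^ (H - 1/2)
          + (t / s) ^ (H - 1/2) * ((H - 1/2) * (t - s) ^ (H - 1/2 - 1) * 1))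
        - (H - 1/2) * s ^ (1/2 - H) * (t ^ (H - 3/2) * (t - s) ^ (H - 1/2)))) t :=
    ((h1.mul h2).sub (h3.const_mul ((H - 1/2) * s ^ (1/2 - H)))).const_mul cH
  rw [hD.deriv]
  -- simplify the value: the first and third terms cancel
  have hcancel : (H - 1/2) * (t / s) ^ (H - 1/2 - 1) * (1 / s) * (t - s) ^ (H - 1/2)
      = (H - 1/2) * s ^ (1/2 - H) * (t ^ (H - 3/2) * (t - s) ^ (H - 1/2)) := by
    rw [Real.div_rpow ht.le hs.le]
    have hs32 : s ^ (H - 1/2 - 1) = s ^ (H - 1/2) / s := by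
      rw [eq_div_iff hs.ne', ← Real.rpow_add_one hs.ne']
      ring_nf
    have hsinv : s ^ (1/2 - H) = (s ^ (H - 1/2))⁻¹ := by
      rw [← Real.rpow_neg hs.le]; ring_nf
    have h32 : H - 1/2 - 1 = H - 3/2 := by ring
    rw [h32] at hs32 ⊢
    rw [hs32, hsinv]
    have hne : s ^ (H - 1/2) ≠ 0 := (Real.rpow_pos_of_pos hs _).ne'
    field_simp
  have hval : cH * (((H - 1/2) * (t / s) ^ (H - 1/2 - 1) * (1 / s) * (t - s) ^ (H - 1/2)
        + (t / s) ^ (H - 1/2) * ((H - 1/2) * (t - s) ^ (H - 1/2 - 1) * 1))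
      - (H - 1/2) * s ^ (1/2 - H) * (t ^ (H - 3/2) * (t - s) ^ (H - 1/2)))
      = -(cH * (1/2 - H) * (t - s) ^ (H - 3/2) * (t / s) ^ (H - 1/2)) := by
    rw [hcancel, show H - 1/2 - 1 = H - 3/2 by ring]
    ring
  rw [hval, abs_neg, abs_of_nonneg (mul_nonneg (mul_nonneg (mul_nonneg hcH0 (by linarith))
    (Real.rpow_pos_of_pos hts _).le) (Real.rpow_pos_of_pos (div_pos ht hs) _).le)]
  have hle1 : (t / s) ^ (H - 1/2) ≤ 1 :=
    Real.rpow_le_one_of_one_le_of_nonpos ((one_le_div hs).2 hst.le) (by linarith)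
  calc cH * (1/2 - H) * (t - s) ^ (H - 3/2) * (t / s) ^ (H - 1/2)
      ≤ cH * (1/2 - H) * (t - s) ^ (H - 3/2) * 1 := by
        apply mul_le_mul_of_nonneg_left hle1
        exact mul_nonneg (mul_nonneg hcH0 (by linarith)) (Real.rpow_pos_of_pos hts _).le
    _ = cH * (1/2 - H) * (t - s) ^ (H - 3/2) := mul_one _
end

section
/- Let H ∈ (0,1/2), γ > 1/2 - H. If σ : [0,T] → ℝ is γ-Hölder with constant C₅, then ∫_0^t (∫_s^t |σ(r)-σ(s)| (r-s)^{H-3/2} dr)² ds ≤ (C₅²/((2α-2)(2H+2γ-2α+1))) ∫_0^t (t-s)^{2γ+2H-1} ds for any α ∈ (1, γ+H+1/2), using the Cauchy–Schwarz splitting (r-s)^{H-3/2} = (r-s)^{(-3+2α)/2} (r-s)^{H - α}. -/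
/-!
Bounding the Hölder increment pointwise, `|σ r - σ s| (r - s)^(H - 3/2) ≤ C₅ (r - s)^(γ + H - 3/2)`,
and integrating (the exponent exceeds `-1` because `γ + H > 1/2`) gives
`(∫_s^t |σ r - σ s| (r - s)^(H - 3/2) dr)² ≤ (C₅ / q)² (t - s)^(2q)` with `q = γ + H - 1/2`.
The constant `C₅² / (a b)` coming from the Cauchy–Schwarz splitting at `α` is weaker, since
`a = 2α - 2` and `b = 2H + 2γ - 2α + 1` satisfy `a + b = 2q`, so `a b ≤ q²` by AM–GM.
-/

open Real intervalIntegral MeasureTheory Set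

lemma integral_mono_on_Ioc_of_nonneg {μ : Measure ℝ} {f g : ℝ → ℝ} {a b : ℝ} (hab : a ≤ b)
    (hg : IntervalIntegrable g μ a b) (hf : ∀ x ∈ Ioc a b, 0 ≤ f x)
    (hfg : ∀ x ∈ Ioc a b, f x ≤ g x) :
    ∫ x in a..b, f x ∂μ ≤ ∫ x in a..b, g x ∂μ := by
  rw [integral_of_le hab, integral_of_le hab]
  exact integral_mono_of_nonneg ((ae_restrict_iff' measurableSet_Ioc).2 (ae_of_all _ hf)) hg.1
    ((ae_restrict_iff' measurableSet_Ioc).2 (ae_of_all _ hfg))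

lemma intervalIntegrable_sub_rpow {p : ℝ} (hp : -1 < p) (s t : ℝ) :
    IntervalIntegrable (fun r => (r - s) ^ p) volume s t := by
  simpa only [sub_add_cancel] using
    (intervalIntegrable_rpow' (a := s - s) (b := t - s) hp).comp_sub_right s

lemma integral_sub_rpow {p : ℝ} (hp : -1 < p) (s t : ℝ) :
    ∫ r in s..t, (r - s) ^ p = (t - s) ^ (p + 1) / (p + 1) := by
  rw [integral_comp_sub_right (fun x => x ^ p), sub_self, integral_rpow (Or.inl hp),
    zero_rpow (by linarith), sub_zero]

lemma integral_abs_sub_mul_rpow_le {σ : ℝ → ℝ} {C γ β s t : ℝ} (hst : s ≤ t)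
    (hγβ : -1 < γ + β) (hσ : ∀ r ∈ Ioc s t, |σ r - σ s| ≤ C * (r - s) ^ γ) :
    ∫ r in s..t, |σ r - σ s| * (r - s) ^ β ≤ C / (γ + β + 1) * (t - s) ^ (γ + β + 1) :=
  calc ∫ r in s..t, |σ r - σ s| * (r - s) ^ β
      ≤ ∫ r in s..t, C * (r - s) ^ (γ + β) := by
        refine integral_mono_on_Ioc_of_nonneg hst
          ((intervalIntegrable_sub_rpow hγβ s t).const_mul C)
          (fun r hr => mul_nonneg (abs_nonneg _) (rpow_nonneg (sub_pos.2 hr.1).le _))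
          (fun r hr => ?_)
        have hrs : 0 < r - s := sub_pos.2 hr.1
        rw [rpow_add hrs, ← mul_assoc]
        exact mul_le_mul_of_nonneg_right (hσ r hr) (rpow_nonneg hrs.le _)
    _ = C / (γ + β + 1) * (t - s) ^ (γ + β + 1) := by
        rw [intervalIntegral.integral_const_mul, integral_sub_rpow hγβ]
        ring

lemma sq_integral_abs_sub_mul_rpow_le {σ : ℝ → ℝ} {C γ β s t : ℝ} (hst : s ≤ t)
    (hγβ : -1 < γ + β) (hσ : ∀ r ∈ Ioc s t, |σ r - σ s| ≤ C * (r - s) ^ γ) :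
    (∫ r in s..t, |σ r - σ s| * (r - s) ^ β) ^ 2
      ≤ (C / (γ + β + 1)) ^ 2 * (t - s) ^ (2 * (γ + β + 1)) := by
  have hnonneg : 0 ≤ ∫ r in s..t, |σ r - σ s| * (r - s) ^ β :=
    integral_nonneg hst fun r hr => mul_nonneg (abs_nonneg _) (rpow_nonneg (sub_nonneg.2 hr.1) _)
  calc (∫ r in s..t, |σ r - σ s| * (r - s) ^ β) ^ 2
      ≤ (C / (γ + β + 1) * (t - s) ^ (γ + β + 1)) ^ 2 :=
        pow_le_pow_left₀ hnonneg (integral_abs_sub_mul_rpow_le hst hγβ hσ) 2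
    _ = (C / (γ + β + 1)) ^ 2 * (t - s) ^ (2 * (γ + β + 1)) := by
        rw [mul_pow, mul_comm 2, ← rpow_mul_natCast (sub_nonneg.2 hst)]
        norm_num

lemma div_sq_le_div_mul_of_add_eq {a b q : ℝ} (c : ℝ) (ha : 0 < a) (hb : 0 < b)
    (hab : a + b = 2 * q) : (c / q) ^ 2 ≤ c ^ 2 / (a * b) := by
  rw [div_pow]
  refine div_le_div_of_nonneg_left (sq_nonneg c) (mul_pos ha hb) ?_
  nlinarith [four_mul_le_sq_add a b]

theorem holder_double_integral_bound_general (H γ α C₅ T : ℝ)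
    (hα : α ∈ Set.Ioo (1:ℝ) (γ + H + 1/2))
    (σ : ℝ → ℝ)
    (hσ : ∀ r ∈ Set.Icc (0:ℝ) T, ∀ s ∈ Set.Icc (0:ℝ) T, |σ r - σ s| ≤ C₅ * |r - s| ^ γ)
    (t : ℝ) (ht : 0 ≤ t) (htT : t ≤ T) :
    ∫ s in (0:ℝ)..t, (∫ r in s..t, |σ r - σ s| * (r - s) ^ (H - 3/2))^2
      ≤ (C₅^2 / ((2*α - 2) * (2*H + 2*γ - 2*α + 1)))
          * ∫ s in (0:ℝ)..t, (t - s) ^ (2*γ + 2*H - 1) := by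
  obtain ⟨hα₁, hα₂⟩ := hα
  have hpointwise : ∀ s ∈ Ioc 0 t, (∫ r in s..t, |σ r - σ s| * (r - s) ^ (H - 3/2)) ^ 2
      ≤ C₅ ^ 2 / ((2*α - 2) * (2*H + 2*γ - 2*α + 1)) * (t - s) ^ (2*γ + 2*H - 1) := by
    intro s hs
    have hincrement : ∀ r ∈ Ioc s t, |σ r - σ s| ≤ C₅ * (r - s) ^ γ := fun r hr => by
      simpa only [abs_of_pos (sub_pos.2 hr.1)] using
        hσ r ⟨hs.1.le.trans hr.1.le, hr.2.trans htT⟩ s ⟨hs.1.le, hs.2.trans htT⟩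
    calc _ ≤ (C₅ / (γ + (H - 3/2) + 1)) ^ 2 * (t - s) ^ (2 * (γ + (H - 3/2) + 1)) :=
          sq_integral_abs_sub_mul_rpow_le hs.2 (by linarith) hincrement
      _ ≤ _ := by
          rw [show 2 * (γ + (H - 3/2) + 1) = 2*γ + 2*H - 1 by ring]
          exact mul_le_mul_of_nonneg_right
            (div_sq_le_div_mul_of_add_eq C₅ (by linarith) (by linarith) (by ring))
            (rpow_nonneg (sub_nonneg.2 hs.2) _)
  have hintegrable : IntervalIntegrable
      (fun s => C₅ ^ 2 / ((2*α - 2) * (2*H + 2*γ - 2*α + 1)) * (t - s) ^ (2*γ + 2*H - 1))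
      volume 0 t :=
    (continuous_const.mul ((continuous_const.sub continuous_id).rpow_const
      fun _ => Or.inr (by linarith))).intervalIntegrable 0 t
  calc _ ≤ ∫ s in (0:ℝ)..t,
        C₅ ^ 2 / ((2*α - 2) * (2*H + 2*γ - 2*α + 1)) * (t - s) ^ (2*γ + 2*H - 1) :=
        integral_mono_on_Ioc_of_nonneg ht hintegrable (fun _ _ => sq_nonneg _) hpointwise
    _ = _ := intervalIntegral.integral_const_mul _ _

theorem holder_double_integral_bound (H γ α C₅ T : ℝ)
    (hH : H ∈ Set.Ioo (0:ℝ) (1/2)) (hγ : γ > 1/2 - H)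
    (hα : α ∈ Set.Ioo (1:ℝ) (γ + H + 1/2)) (hC : 0 < C₅)
    (σ : ℝ → ℝ)
    (hσ : ∀ r ∈ Set.Icc (0:ℝ) T, ∀ s ∈ Set.Icc (0:ℝ) T, |σ r - σ s| ≤ C₅ * |r - s| ^ γ)
    (t : ℝ) (ht : 0 ≤ t) (htT : t ≤ T) :
    ∫ s in (0:ℝ)..t, (∫ r in s..t, |σ r - σ s| * (r - s) ^ (H - 3/2))^2
      ≤ (C₅^2 / ((2*α - 2) * (2*H + 2*γ - 2*α + 1)))
          * ∫ s in (0:ℝ)..t, (t - s) ^ (2*γ + 2*H - 1) :=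
  holder_double_integral_bound_general H γ α C₅ T hα σ hσ t ht htT
end
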